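/- Let F : Ordinal → Ordinal be any function, let α, β be ordinals < ε(Ω), and let η, ξ be any ordinals. Then F^β(η) < F^α(ξ) holds if one of the following holds: (1) β < α and K_Ω β ∪ {η} < F^α(ξ); (2) α ≤ β and F^β(η) ≤ ζ for some ζ ∈ K_Ω α. -/

import Mathlib

/-!
For `α ≠ 0`, `F^α ξ` is the infimum of the ordinals `γ` satisfying its defining conditions, so
as soon as one such `γ` exists, `F^α ξ` satisfies them itself, and both cases are read off
those conditions (case (2) forces `α ≠ 0` because `K_Ω 0 = ∅`). Such a `γ` is the supremum of
an `ω`-sequence whose every term is an `ε`-number above the previous one and above all `F^β η`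
with `β < α` and `η` below it; since coefficients of `α` are at most `α`, starting above `α`
and `ξ` suffices.
-/

open Ordinal

/-- The least ordinal `λ` with `Ω ^ λ = λ`. -/
noncomputable def epsOmega (Ω : Ordinal) : Ordinal := sInf {x : Ordinal | Ω ^ x = x}

/-- The set `K_Ω α` of coefficients of `α`, defined by recursion on `α` via the
base-`Ω` Cantor normal form: `K_Ω α = {β₁,…,β_l} ∪ K_Ω α₁ ∪ ⋯ ∪ K_Ω α_l`. -/
noncomputable def KOmega (Ω : Ordinal) : Ordinal → Set Ordinal :=
  WellFounded.fix Ordinal.lt_wf fun α IH =>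
    {β | ∃ p ∈ Ordinal.CNF Ω α, p.2 = β} ∪
    {β | ∃ p ∈ Ordinal.CNF Ω α, ∃ h : p.1 < α, β ∈ IH p.1 h}

/-- The hierarchy `F^α`: `F^0 ξ = F ξ`, and for `α > 0`, `F^α ξ` is the least `γ` with
`ω^γ = γ`, `K_Ω α ∪ {ξ} < γ`, and `F^β η < γ` for all `η < γ` and `β < α` with `K_Ω β < γ`. -/
noncomputable def Hier (Ω : Ordinal) (F : Ordinal → Ordinal) : Ordinal → Ordinal → Ordinal :=
  WellFounded.fix Ordinal.lt_wf fun α IH =>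
    if _ : α = 0 then F
    else fun ξ => sInf {γ : Ordinal | omega0 ^ γ = γ ∧ (∀ x ∈ KOmega Ω α, x < γ) ∧ ξ < γ ∧
      ∀ η < γ, ∀ β, ∀ hβ : β < α, (∀ x ∈ KOmega Ω β, x < γ) → IH β hβ η < γ}

theorem Ordinal.CNF.snd_le_self {b o : Ordinal} {p : Ordinal × Ordinal} :
    p ∈ CNF b o → p.2 ≤ o := by
  refine CNF.rec b (by simp) (fun o ho IH ↦ ?_) o
  rw [CNF.ne_zero ho]
  rintro (_ | ⟨_, hp⟩)
  · rcases eq_or_ne (b ^ log b o) 0 with h0 | h0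
    · simp [h0]
    · exact div_le_of_le_mul (le_mul_right o (pos_iff_ne_zero.2 h0))
  · exact (IH hp).trans (mod_le _ _)

theorem exists_gt_omega0_opow_fixedPoint_closed (h : Ordinal → Ordinal)
    (c : Ordinal) : ∃ γ, c < γ ∧ ω ^ γ = γ ∧ ∀ δ < γ, h δ < γ := by
  set g : Ordinal → Ordinal := fun x ↦ nfp (ω ^ ·) (Order.succ (max x (⨆ δ : Set.Iio x, h δ)))
  have hω := isNormal_opow one_lt_omega0
  have hg_fixed (x) : ω ^ g x = g x := nfp_fp hω _
  have hg_gt (x) : x < g x :=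
    (Order.lt_succ_of_le (le_max_left _ _)).trans_le (le_nfp _ _)
  have hg_closed (x) : ∀ δ < x, h δ < g x := fun δ hδ ↦
    ((Ordinal.le_iSup (fun δ : Set.Iio x ↦ h δ) ⟨δ, hδ⟩).trans (le_max_right _ _)
      |> Order.lt_succ_of_le).trans_le (le_nfp _ _)
  refine ⟨nfp g c, (hg_gt c).trans_le (iterate_le_nfp g c 1), ?_, fun δ hδ ↦ ?_⟩
  · refine le_antisymm ?_ (right_le_opow _ one_lt_omega0)
    rw [← iSup_iterate_eq_nfp, hω.map_iSup Ordinal.bddAbove_of_small]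
    refine Ordinal.iSup_le fun n ↦ ?_
    calc ω ^ g^[n] c ≤ ω ^ g^[n + 1] c := by
          rw [Function.iterate_succ_apply']
          exact opow_le_opow_right omega0_pos (hg_gt _).le
      _ = g^[n + 1] c := by rw [Function.iterate_succ_apply', hg_fixed]
      _ ≤ ⨆ n, g^[n] c := Ordinal.le_iSup (fun n ↦ g^[n] c) (n + 1)
  · obtain ⟨n, hn⟩ := lt_nfp_iff.1 hδ
    calc h δ < g (g^[n] c) := hg_closed _ δ hn
      _ = g^[n + 1] c := (Function.iterate_succ_apply' g n c).symm
      _ ≤ nfp g c := iterate_le_nfp g c (n + 1)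

lemma KOmega_eq (Ω α : Ordinal) : KOmega Ω α =
    {β | ∃ p ∈ CNF Ω α, p.2 = β} ∪ {β | ∃ p ∈ CNF Ω α, ∃ _ : p.1 < α, β ∈ KOmega Ω p.1} :=
  WellFounded.fix_eq ..

@[simp]
lemma KOmega_zero (Ω : Ordinal) : KOmega Ω 0 = ∅ := by
  simp [KOmega_eq Ω 0]

lemma le_of_mem_KOmega {Ω α x : Ordinal} (hx : x ∈ KOmega Ω α) : x ≤ α := by
  induction α using WellFoundedLT.induction with
  | _ α IH =>
    rw [KOmega_eq] at hx
    rcases hx with ⟨p, hp, rfl⟩ | ⟨p, -, hpα, hx⟩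
    · exact CNF.snd_le_self hp
    · exact (IH p.1 hpα hx).trans hpα.le

def IsHierBound (Ω : Ordinal) (F : Ordinal → Ordinal) (α ξ γ : Ordinal) : Prop :=
  ω ^ γ = γ ∧ (∀ x ∈ KOmega Ω α, x < γ) ∧ ξ < γ ∧
    ∀ η < γ, ∀ β < α, (∀ x ∈ KOmega Ω β, x < γ) → Hier Ω F β η < γ

lemma Hier_eq_sInf {Ω : Ordinal} (F : Ordinal → Ordinal) {α : Ordinal} (hα : α ≠ 0)
    (ξ : Ordinal) : Hier Ω F α ξ = sInf {γ | IsHierBound Ω F α ξ γ} := by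
  rw [Hier, WellFounded.fix_eq, dif_neg hα]
  rfl

lemma exists_isHierBound (Ω : Ordinal) (F : Ordinal → Ordinal) (α ξ : Ordinal) :
    ∃ γ, IsHierBound Ω F α ξ γ := by
  obtain ⟨γ, hγ, hfixed, hclosed⟩ :=
    exists_gt_omega0_opow_fixedPoint_closed (fun η ↦ ⨆ β : Set.Iio α, Hier Ω F β η) (max α ξ)
  refine ⟨γ, hfixed, fun x hx ↦ ?_, (le_max_right α ξ).trans_lt hγ, fun η hη β hβ _ ↦ ?_⟩
  · exact (le_of_mem_KOmega hx).trans_lt ((le_max_left α ξ).trans_lt hγ)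
  · exact (Ordinal.le_iSup (fun β : Set.Iio α ↦ Hier Ω F β η) ⟨β, hβ⟩).trans_lt (hclosed η hη)

lemma isHierBound_Hier {Ω : Ordinal} (F : Ordinal → Ordinal) {α : Ordinal} (hα : α ≠ 0)
    (ξ : Ordinal) : IsHierBound Ω F α ξ (Hier Ω F α ξ) := by
  rw [Hier_eq_sInf F hα]
  exact csInf_mem (exists_isHierBound Ω F α ξ)

theorem stmt1_general (Ω : Ordinal) (F : Ordinal → Ordinal) (α β : Ordinal)
    (η ξ : Ordinal)
    (h : (β < α ∧ (∀ x ∈ KOmega Ω β, x < Hier Ω F α ξ) ∧ η < Hier Ω F α ξ) ∨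
         (α ≤ β ∧ ∃ ζ ∈ KOmega Ω α, Hier Ω F β η ≤ ζ)) :
    Hier Ω F β η < Hier Ω F α ξ := by
  rcases h with ⟨hβα, hKβ, hη⟩ | ⟨-, ζ, hζ, hle⟩
  · exact (isHierBound_Hier F hβα.ne_bot ξ).2.2.2 η hη β hβα hKβ
  · have hα : α ≠ 0 := by
      rintro rfl
      simp at hζ
    exact hle.trans_lt ((isHierBound_Hier F hα ξ).2.1 ζ hζ)

/-- F^β(η) < F^α(ξ) holds if either (1) β < α and K_Ω β ∪ {η} < F^α(ξ), or
(2) α ≤ β and F^β(η) ≤ ζ for some ζ ∈ K_Ω α. -/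
theorem stmt1 (Ω : Ordinal) (hΩ : 1 < Ω) (F : Ordinal → Ordinal) (α β : Ordinal)
    (hα : α < epsOmega Ω) (hβ : β < epsOmega Ω) (η ξ : Ordinal)
    (h : (β < α ∧ (∀ x ∈ KOmega Ω β, x < Hier Ω F α ξ) ∧ η < Hier Ω F α ξ) ∨
         (α ≤ β ∧ ∃ ζ ∈ KOmega Ω α, Hier Ω F β η ≤ ζ)) :
    Hier Ω F β η < Hier Ω F α ξ :=
  stmt1_general Ω F α β η ξ h
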